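/- arXiv:1706.06231 — 7 statements merged into one kernel-verified Lean document; each statement's English description precedes it below -/
import Mathlib

section
/- The permutations 132 and 312 are des-Wilf equivalent: for all n, ∑_{σ ∈ Av_n(132)} q^{des(σ)} = ∑_{σ ∈ Av_n(312)} q^{des(σ)}. -/
open Polynomial

def des {n : ℕ} (σ : Equiv.Perm (Fin n)) : ℕ :=
  (Finset.univ.filter (fun i : Fin n =>
    ∃ h : (i : ℕ) + 1 < n, σ ⟨(i : ℕ) + 1, h⟩ < σ i)).card

def avoids312 {n : ℕ} (σ : Equiv.Perm (Fin n)) : Prop :=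
  ¬ ∃ i j k : Fin n, i < j ∧ j < k ∧ σ j < σ k ∧ σ k < σ i

def avoids132 {n : ℕ} (σ : Equiv.Perm (Fin n)) : Prop :=
  ¬ ∃ i j k : Fin n, i < j ∧ j < k ∧ σ i < σ k ∧ σ k < σ j

instance {n : ℕ} : DecidablePred (avoids312 (n := n)) := fun σ => by
  unfold avoids312; infer_instance

instance {n : ℕ} : DecidablePred (avoids132 (n := n)) := fun σ => by
  unfold avoids132; infer_instance

/-!
Complementing the values, `σ ↦ Fin.revPerm * σ`, exchanges the `312`- and the `132`-avoiders and
turns `des σ` into `n - 1 - des σ`. A `132`-avoider of size `m + 1` is uniquely a skew sum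
`(α ⊕ 1) ⊖ β` of `132`-avoiders of sizes `p + b = m`, and then
`des = des α + des β + [b ≠ 0]`. So both descent polynomials obey the recursion
`A (m + 1) = ∑_{p + b = m} A p * A b * X ^ [·]`, with the exponent `[b ≠ 0]` for `132` and
`[p ≠ 0]` for `312`; the two recursions agree after exchanging `p` and `b`.
-/

open Finset Equiv

namespace Equiv.Perm

variable {n : ℕ}

-- Permutations are handled through `ℕ`-indexed words, so that cutting a permutation into blocks
-- needs no casts between `Fin` types.
def oneLine (σ : Perm (Fin n)) (i : ℕ) : ℕ :=
  if h : i < n then σ ⟨i, h⟩ else 0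

lemma oneLine_of_lt (σ : Perm (Fin n)) {i : ℕ} (h : i < n) : σ.oneLine i = σ ⟨i, h⟩ :=
  dif_pos h

@[simp]
lemma oneLine_val (σ : Perm (Fin n)) (i : Fin n) : σ.oneLine i = σ i :=
  σ.oneLine_of_lt i.2

lemma oneLine_of_le (σ : Perm (Fin n)) {i : ℕ} (h : n ≤ i) : σ.oneLine i = 0 :=
  dif_neg (by omega)

lemma oneLine_lt (σ : Perm (Fin n)) {i : ℕ} (h : i < n) : σ.oneLine i < n := by
  rw [σ.oneLine_of_lt h]
  exact Fin.is_lt _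

lemma injOn_oneLine (σ : Perm (Fin n)) : Set.InjOn σ.oneLine (Set.Iio n) := by
  intro i (hi : i < n) j (hj : j < n) h
  rw [σ.oneLine_of_lt hi, σ.oneLine_of_lt hj, Fin.val_inj, σ.apply_eq_iff_eq] at h
  exact Fin.mk.inj h

lemma ext_oneLine {σ τ : Perm (Fin n)} (h : ∀ i < n, σ.oneLine i = τ.oneLine i) : σ = τ :=
  Equiv.ext fun i => Fin.ext (by simpa using h i i.2)

noncomputable def ofOneLine (w : ℕ → ℕ) (hw : ∀ i < n, w i < n)
    (hinj : Set.InjOn w (Set.Iio n)) : Perm (Fin n) :=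
  Equiv.ofBijective (fun i => ⟨w i, hw i i.2⟩) <| Finite.injective_iff_bijective.mp
    fun i j h => Fin.ext (hinj i.2 j.2 (Fin.mk.inj h))

lemma oneLine_ofOneLine {w : ℕ → ℕ} (hw : ∀ i < n, w i < n) (hinj : Set.InjOn w (Set.Iio n))
    {i : ℕ} (hi : i < n) : (ofOneLine w hw hinj).oneLine i = w i := by
  rw [oneLine_of_lt _ hi]
  rfl

end Equiv.Perm

open Equiv.Perm

def Contains132 (n : ℕ) (w : ℕ → ℕ) : Prop :=
  ∃ i j k, i < j ∧ j < k ∧ k < n ∧ w i < w k ∧ w k < w j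

def descentCount (n : ℕ) (w : ℕ → ℕ) : ℕ :=
  #{i ∈ range n | i + 1 < n ∧ w (i + 1) < w i}

variable {n : ℕ}

lemma avoids132_iff_not_contains132 (σ : Perm (Fin n)) :
    avoids132 σ ↔ ¬ Contains132 n σ.oneLine := by
  refine not_congr ⟨fun ⟨i, j, k, hij, hjk, hik, hkj⟩ => ?_,
    fun ⟨i, j, k, hij, hjk, hk, hik, hkj⟩ => ?_⟩
  · exact ⟨i, j, k, hij, hjk, k.2, by simpa using hik, by simpa using hkj⟩
  · rw [σ.oneLine_of_lt hk] at hik hkj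
    rw [σ.oneLine_of_lt (by omega)] at hik hkj
    exact ⟨⟨i, by omega⟩, ⟨j, by omega⟩, ⟨k, hk⟩, hij, hjk, hik, hkj⟩

lemma des_eq_descentCount (σ : Perm (Fin n)) : des σ = descentCount n σ.oneLine := by
  refine card_bij (fun i _ => i) (fun i hi => ?_) (fun i _ j _ h => Fin.ext h) fun i hi => ?_
  · obtain ⟨h, hlt⟩ := (mem_filter.mp hi).2
    simpa [σ.oneLine_of_lt h, h] using hlt
  · obtain ⟨hi, h, hlt⟩ := by simpa using hi
    refine ⟨⟨i, hi⟩, ?_, rfl⟩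
    simpa [σ.oneLine_of_lt h, σ.oneLine_of_lt hi, h] using hlt

lemma avoids312_revPerm_mul_iff (σ : Perm (Fin n)) :
    avoids312 (Fin.revPerm * σ) ↔ avoids132 σ := by
  simp only [avoids312, avoids132, Perm.mul_apply, Fin.revPerm_apply, Fin.rev_lt_rev]
  constructor <;> rintro h ⟨i, j, k, hij, hjk, h₁, h₂⟩ <;>
    exact h ⟨i, j, k, hij, hjk, h₂, h₁⟩

lemma revPerm_mul_revPerm_mul (σ : Perm (Fin n)) :
    Fin.revPerm * (Fin.revPerm * σ) = σ := by
  ext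
  simp

lemma des_eq_card_filter_range (σ : Perm (Fin n)) :
    des σ = #{i ∈ range (n - 1) | σ.oneLine (i + 1) < σ.oneLine i} := by
  rw [des_eq_descentCount, descentCount]
  congr 1
  ext i
  simp only [mem_filter, mem_range]
  omega

lemma des_revPerm_mul_add_des (σ : Perm (Fin n)) :
    des (Fin.revPerm * σ) + des σ = n - 1 := by
  have hrev : ∀ i < n, (Fin.revPerm * σ).oneLine i = n - 1 - σ.oneLine i := fun i hi => by
    simp only [oneLine_of_lt _ hi, Perm.mul_apply, Fin.revPerm_apply, Fin.val_rev]
    omega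
  have hasc :
      des (Fin.revPerm * σ) = #{i ∈ range (n - 1) | σ.oneLine i < σ.oneLine (i + 1)} := by
    rw [des_eq_card_filter_range]
    refine congrArg card (filter_congr fun i hi => ?_)
    have hi : i + 1 < n := by rw [mem_range] at hi; omega
    have := σ.oneLine_lt hi
    rw [hrev i (by omega), hrev (i + 1) hi]
    omega
  have hdes : des σ = #{i ∈ range (n - 1) | ¬ σ.oneLine i < σ.oneLine (i + 1)} := by
    rw [des_eq_card_filter_range]
    refine congrArg card (filter_congr fun i hi => ?_)
    have hi : i + 1 < n := by rw [mem_range] at hi; omega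
    have : σ.oneLine i ≠ σ.oneLine (i + 1) := fun h => by
      have := σ.injOn_oneLine (show i < n by omega) hi h
      omega
    omega
  rw [hasc, hdes, card_filter_add_card_filter_not, card_range]

lemma des_le (σ : Perm (Fin n)) : des σ ≤ n - 1 := by
  have := des_revPerm_mul_add_des σ
  omega

lemma sum_avoids312_eq {M : Type*} [AddCommMonoid M] (f : ℕ → M) :
    ∑ σ : Perm (Fin n) with avoids312 σ, f (des σ) =
      ∑ σ : Perm (Fin n) with avoids132 σ, f (n - 1 - des σ) := by
  refine sum_nbij' (Fin.revPerm * ·) (Fin.revPerm * ·) (fun σ hσ => ?_) (fun σ hσ => ?_)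
    (fun σ _ => revPerm_mul_revPerm_mul σ) (fun σ _ => revPerm_mul_revPerm_mul σ)
    fun σ _ => ?_
  · simp only [mem_filter, mem_univ, true_and] at hσ ⊢
    rwa [← avoids312_revPerm_mul_iff, revPerm_mul_revPerm_mul]
  · simp only [mem_filter, mem_univ, true_and] at hσ ⊢
    rwa [avoids312_revPerm_mul_iff]
  · have := des_revPerm_mul_add_des σ
    congr 1
    omega

/-- One-line notation of the skew sum `(u ⊕ 1) ⊖ v` of words of lengths `p` and `b`. -/
def skewWord (p b : ℕ) (u v : ℕ → ℕ) (i : ℕ) : ℕ :=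
  if i < p then b + u i else if i = p then p + b else v (i - (p + 1))

section SkewWord

variable {p b : ℕ} {u v : ℕ → ℕ}

lemma skewWord_of_lt {i : ℕ} (h : i < p) : skewWord p b u v i = b + u i :=
  if_pos h

@[simp]
lemma skewWord_self : skewWord p b u v p = p + b := by
  simp [skewWord]

@[simp]
lemma skewWord_add_add_one (j : ℕ) : skewWord p b u v (p + j + 1) = v j := by
  rw [skewWord, if_neg (by omega), if_neg (by omega), show p + j + 1 - (p + 1) = j by omega]

lemma le_skewWord_of_le {i : ℕ} (h : i ≤ p) : b ≤ skewWord p b u v i := by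
  rcases h.lt_or_eq with h | rfl
  · simp [skewWord_of_lt h]
  · simp

lemma skewWord_lt_of_lt (hu : ∀ i < p, u i < p) {i : ℕ} (h : i < p) :
    skewWord p b u v i < p + b := by
  have := hu i h
  rw [skewWord_of_lt h]
  omega

lemma skewWord_lt_of_gt (hv : ∀ j < b, v j < b) {i : ℕ} (h : p < i) (h' : i < p + b + 1) :
    skewWord p b u v i < b := by
  obtain ⟨j, rfl⟩ := Nat.exists_eq_add_of_lt h
  simpa using hv j (by omega)

lemma skewWord_lt (hu : ∀ i < p, u i < p) (hv : ∀ j < b, v j < b) {i : ℕ}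
    (h : i < p + b + 1) : skewWord p b u v i < p + b + 1 := by
  rcases lt_trichotomy i p with hi | rfl | hi
  · have := skewWord_lt_of_lt (b := b) (v := v) hu hi; omega
  · simp
  · have := skewWord_lt_of_gt (u := u) hv hi h; omega

lemma injOn_skewWord (hu : ∀ i < p, u i < p) (hv : ∀ j < b, v j < b)
    (hu' : Set.InjOn u (Set.Iio p)) (hv' : Set.InjOn v (Set.Iio b)) :
    Set.InjOn (skewWord p b u v) (Set.Iio (p + b + 1)) := by
  intro i (hi : i < p + b + 1) j (hj : j < p + b + 1) h
  wlog hij : i ≤ j generalizing i j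
  · exact (this hj hi h.symm (by omega)).symm
  rcases lt_or_ge p j with hpj | hjp
  · obtain ⟨j, rfl⟩ := Nat.exists_eq_add_of_lt hpj
    rcases lt_or_ge p i with hpi | hip
    · obtain ⟨i, rfl⟩ := Nat.exists_eq_add_of_lt hpi
      simp only [skewWord_add_add_one] at h
      rw [hv' (show i < b by omega) (show j < b by omega) h]
    · have := le_skewWord_of_le (b := b) (u := u) (v := v) hip
      have := skewWord_lt_of_gt (u := u) hv hpj hj
      omega
  rcases hjp.lt_or_eq with hjp | rfl
  · rw [skewWord_of_lt (by omega), skewWord_of_lt hjp, Nat.add_left_cancel_iff] at h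
    exact hu' (show i < p by omega) hjp h
  rcases hij.lt_or_eq with hij | rfl
  · have := skewWord_lt_of_lt (b := b) (v := v) hu hij
    simp only [skewWord_self] at h
    omega
  · rfl

lemma contains132_skewWord_iff (hu : ∀ i < p, u i < p) (hv : ∀ j < b, v j < b) :
    Contains132 (p + b + 1) (skewWord p b u v) ↔ Contains132 p u ∨ Contains132 b v := by
  constructor
  · rintro ⟨i, j, k, hij, hjk, hk, hik, hkj⟩
    rcases lt_trichotomy k p with hkp | rfl | hpk
    · rw [skewWord_of_lt (show i < p by omega), skewWord_of_lt hkp] at hik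
      rw [skewWord_of_lt hkp, skewWord_of_lt (show j < p by omega)] at hkj
      exact Or.inl ⟨i, j, k, hij, hjk, hkp, by omega, by omega⟩
    · have := skewWord_lt_of_lt (b := b) (v := v) hu hjk
      simp only [skewWord_self] at hkj
      omega
    · -- the letter at `k` comes from `v`, so it is below every letter up to position `p`
      have hkb := skewWord_lt_of_gt (u := u) hv hpk hk
      have hpi : p < i := by
        by_contra! hip
        have := le_skewWord_of_le (b := b) (u := u) (v := v) hip
        omega
      obtain ⟨i, rfl⟩ := Nat.exists_eq_add_of_lt hpi
      obtain ⟨j, rfl⟩ := Nat.exists_eq_add_of_lt (hpi.trans hij)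
      obtain ⟨k, rfl⟩ := Nat.exists_eq_add_of_lt hpk
      simp only [skewWord_add_add_one] at hik hkj
      exact Or.inr ⟨i, j, k, by omega, by omega, by omega, hik, hkj⟩
  · rintro (⟨i, j, k, hij, hjk, hk, hik, hkj⟩ | ⟨i, j, k, hij, hjk, hk, hik, hkj⟩)
    · refine ⟨i, j, k, hij, hjk, by omega, ?_, ?_⟩
      · rw [skewWord_of_lt (show i < p by omega), skewWord_of_lt hk]
        omega
      · rw [skewWord_of_lt hk, skewWord_of_lt (show j < p by omega)]
        omega
    · exact ⟨p + i + 1, p + j + 1, p + k + 1, by omega, by omega, by omega, by simpa, by simpa⟩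

lemma descentCount_skewWord (hu : ∀ i < p, u i < p) (hv : ∀ j < b, v j < b) :
    descentCount (p + b + 1) (skewWord p b u v) =
      descentCount p u + descentCount b v + if b = 0 then 0 else 1 := by
  simp only [descentCount, card_filter]
  rw [show p + b + 1 = p + (b + 1) by omega, sum_range_add, sum_range_succ', ← add_assoc]
  congr 1
  congr 1
  · refine sum_congr rfl fun i hi => if_congr ?_ rfl rfl
    have hip := mem_range.mp hi
    rcases (show i + 1 ≤ p by omega).lt_or_eq with hi' | hi'
    · rw [skewWord_of_lt hi', skewWord_of_lt hip]
      omega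
    · have := hu i hip
      rw [hi', skewWord_self, skewWord_of_lt hip]
      omega
  · refine sum_congr rfl fun j _ => if_congr ?_ rfl rfl
    have hnext : skewWord p b u v (p + (j + 1)) = v j := skewWord_add_add_one j
    rw [skewWord_add_add_one, hnext]
    omega
  · rcases Nat.eq_zero_or_pos b with rfl | hb
    · simp
    · have := hv 0 hb
      have hfirst : skewWord p b u v (p + 1) = v 0 := skewWord_add_add_one 0
      simp only [add_zero, hfirst, skewWord_self]
      rw [if_pos (by omega), if_neg (by omega)]

end SkewWord

namespace Equiv.Perm

variable {p b : ℕ}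

noncomputable def skewSum (α : Perm (Fin p)) (β : Perm (Fin b)) : Perm (Fin (p + b + 1)) :=
  ofOneLine (skewWord p b α.oneLine β.oneLine)
    (fun _ => skewWord_lt (fun _ => α.oneLine_lt) (fun _ => β.oneLine_lt))
    (injOn_skewWord (fun _ => α.oneLine_lt) (fun _ => β.oneLine_lt) α.injOn_oneLine
      β.injOn_oneLine)

lemma oneLine_skewSum (α : Perm (Fin p)) (β : Perm (Fin b)) :
    (skewSum α β).oneLine = skewWord p b α.oneLine β.oneLine := by
  funext i
  rcases lt_or_ge i (p + b + 1) with hi | hi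
  · exact oneLine_ofOneLine _ _ hi
  · obtain ⟨j, rfl⟩ := Nat.exists_eq_add_of_lt (show p < i by omega)
    rw [oneLine_of_le _ hi, skewWord_add_add_one, oneLine_of_le _ (by omega)]

lemma avoids132_skewSum_iff {α : Perm (Fin p)} {β : Perm (Fin b)} :
    avoids132 (skewSum α β) ↔ avoids132 α ∧ avoids132 β := by
  simp only [avoids132_iff_not_contains132, oneLine_skewSum,
    contains132_skewWord_iff (fun _ => α.oneLine_lt) (fun _ => β.oneLine_lt), not_or]

lemma des_skewSum (α : Perm (Fin p)) (β : Perm (Fin b)) :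
    des (skewSum α β) = des α + des β + if b = 0 then 0 else 1 := by
  simp only [des_eq_descentCount, oneLine_skewSum,
    descentCount_skewWord (fun _ => α.oneLine_lt) (fun _ => β.oneLine_lt)]

lemma skewSum_injective :
    Function.Injective fun x : Perm (Fin p) × Perm (Fin b) => skewSum x.1 x.2 := by
  rintro ⟨α, β⟩ ⟨α', β'⟩ h
  have h := congrArg oneLine h
  simp only [oneLine_skewSum] at h
  refine Prod.ext (ext_oneLine fun i hi => ?_) (ext_oneLine fun j _ => ?_)
  · simpa [skewWord_of_lt hi] using congrFun h i
  · simpa using congrFun h (p + j + 1)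

section MaximumAt

variable {σ : Perm (Fin (p + b + 1))}

lemma oneLine_lt_of_ne (htop : σ.oneLine p = p + b) {j : ℕ} (hj : j < p + b + 1)
    (hjp : j ≠ p) : σ.oneLine j < p + b := by
  have := σ.oneLine_lt hj
  have : σ.oneLine j ≠ σ.oneLine p := fun h => hjp (σ.injOn_oneLine hj (by simp) h)
  omega

lemma oneLine_lt_oneLine_of_avoids132 (hσ : avoids132 σ) (htop : σ.oneLine p = p + b)
    {i j : ℕ} (hi : i < p) (hj : p < j) (hj' : j < p + b + 1) : σ.oneLine j < σ.oneLine i := by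
  have hij : σ.oneLine i ≠ σ.oneLine j := fun h => by
    have := σ.injOn_oneLine (show i < p + b + 1 by omega) hj' h
    omega
  have := oneLine_lt_of_ne htop hj' hj.ne'
  by_contra! h
  -- otherwise `i, p, j` is an occurrence of `132`
  exact (avoids132_iff_not_contains132 σ).mp hσ
    ⟨i, p, j, hi, hj, hj', lt_of_le_of_ne h hij, by omega⟩

lemma le_oneLine_of_avoids132 (hσ : avoids132 σ) (htop : σ.oneLine p = p + b)
    {i : ℕ} (hi : i < p) : b ≤ σ.oneLine i := by
  have := card_le_card_of_injOn (fun j => σ.oneLine (p + j + 1)) (s := range b)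
    (t := range (σ.oneLine i))
    (fun j hj => by
      simp only [coe_range, Set.mem_Iio] at hj ⊢
      exact oneLine_lt_oneLine_of_avoids132 hσ htop hi (by omega) (by omega))
    (fun j hj k hk h => by
      simp only [coe_range, Set.mem_Iio] at hj hk
      have := σ.injOn_oneLine (show p + j + 1 < p + b + 1 by omega)
        (show p + k + 1 < p + b + 1 by omega) h
      omega)
  simpa using this

lemma oneLine_lt_of_avoids132 (hσ : avoids132 σ) (htop : σ.oneLine p = p + b)
    {j : ℕ} (hj : p < j) (hj' : j < p + b + 1) : σ.oneLine j < b := by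
  have := card_le_card_of_injOn σ.oneLine (s := range (p + 1))
    (t := Ioo (σ.oneLine j) (p + b + 1))
    (fun i hi => by
      simp only [coe_range, Set.mem_Iio, coe_Ioo, Set.mem_Ioo] at hi ⊢
      refine ⟨?_, σ.oneLine_lt (by omega)⟩
      rcases (Nat.lt_succ_iff.mp hi).lt_or_eq with hi | hi
      · exact oneLine_lt_oneLine_of_avoids132 hσ htop hi hj hj'
      · rw [hi, htop]
        exact oneLine_lt_of_ne htop hj' hj.ne')
    (σ.injOn_oneLine.mono fun i hi => by simp only [coe_range, Set.mem_Iio] at hi ⊢; omega)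
  simp only [card_range, Nat.card_Ioo] at this
  omega

lemma exists_skewSum_eq_of_avoids132 (hσ : avoids132 σ) (htop : σ.oneLine p = p + b) :
    ∃ α β, skewSum α β = σ := by
  have hα : ∀ i < p, σ.oneLine i - b < p := fun i hi => by
    have := oneLine_lt_of_ne htop (show i < p + b + 1 by omega) hi.ne
    omega
  have hβ : ∀ j < b, σ.oneLine (p + j + 1) < b := fun j hj =>
    oneLine_lt_of_avoids132 hσ htop (by omega) (by omega)
  have hαinj : Set.InjOn (fun i => σ.oneLine i - b) (Set.Iio p) :=
    fun i (hi : i < p) k (hk : k < p) h => by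
      have := le_oneLine_of_avoids132 hσ htop hi
      have := le_oneLine_of_avoids132 hσ htop hk
      exact σ.injOn_oneLine (show i < p + b + 1 by omega) (show k < p + b + 1 by omega)
        (by simp only at h; omega)
  have hβinj : Set.InjOn (fun j => σ.oneLine (p + j + 1)) (Set.Iio b) :=
    fun j (hj : j < b) k (hk : k < b) h => by
      have := σ.injOn_oneLine (show p + j + 1 < p + b + 1 by omega)
        (show p + k + 1 < p + b + 1 by omega) h
      omega
  refine ⟨ofOneLine _ hα hαinj, ofOneLine _ hβ hβinj, ext_oneLine fun i hi => ?_⟩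
  rw [oneLine_skewSum]
  rcases lt_trichotomy i p with h | rfl | h
  · have := le_oneLine_of_avoids132 hσ htop h
    rw [skewWord_of_lt h, oneLine_ofOneLine _ _ h]
    omega
  · rw [skewWord_self, htop]
  · obtain ⟨j, rfl⟩ := Nat.exists_eq_add_of_lt h
    rw [skewWord_add_add_one, oneLine_ofOneLine _ _ (by omega)]

end MaximumAt

end Equiv.Perm

section Recurrence

variable {M : Type*} [AddCommMonoid M] (f : ℕ → M)

lemma sum_avoids132_oneLine_eq (p b : ℕ) :
    ∑ σ : Perm (Fin (p + b + 1)) with avoids132 σ ∧ σ.oneLine p = p + b, f (des σ) =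
      ∑ α : Perm (Fin p) with avoids132 α, ∑ β : Perm (Fin b) with avoids132 β,
        f (des α + des β + if b = 0 then 0 else 1) := by
  rw [← sum_product']
  symm
  refine sum_bij (fun x _ => skewSum x.1 x.2) (fun x hx => ?_)
    (fun x _ y _ h => skewSum_injective h) (fun σ hσ => ?_) fun x _ => by rw [des_skewSum]
  · simp only [mem_product, mem_filter, mem_univ, true_and] at hx ⊢
    exact ⟨avoids132_skewSum_iff.mpr hx, by simp [oneLine_skewSum]⟩
  · simp only [mem_filter, mem_univ, true_and] at hσ
    obtain ⟨α, β, rfl⟩ := exists_skewSum_eq_of_avoids132 hσ.1 hσ.2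
    exact ⟨(α, β), by simpa [avoids132_skewSum_iff] using hσ.1, rfl⟩

lemma sum_avoids132_succ (m : ℕ) :
    ∑ σ : Perm (Fin (m + 1)) with avoids132 σ, f (des σ) =
      ∑ x ∈ antidiagonal m, ∑ α : Perm (Fin x.1) with avoids132 α,
        ∑ β : Perm (Fin x.2) with avoids132 β,
          f (des α + des β + if x.2 = 0 then 0 else 1) := by
  -- sort the permutations by the position of their maximum `m`
  rw [← sum_fiberwise_of_maps_to (t := antidiagonal m)
    (g := fun σ : Perm (Fin (m + 1)) => ((σ.symm (Fin.last m) : ℕ), m - σ.symm (Fin.last m)))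
    fun σ _ => mem_antidiagonal.mpr (by have := (σ.symm (Fin.last m)).is_le; omega)]
  refine sum_congr rfl fun ⟨p, b⟩ hpb => ?_
  obtain rfl : m = p + b := (mem_antidiagonal.mp hpb).symm
  rw [← sum_avoids132_oneLine_eq, filter_filter]
  refine sum_congr (filter_congr fun σ _ => and_congr_right fun _ => ?_) fun _ _ => rfl
  simp only [Prod.mk.injEq]
  constructor
  · rintro ⟨h, -⟩
    have : σ.symm (Fin.last (p + b)) = ⟨p, by omega⟩ := Fin.ext h
    rw [oneLine_of_lt _ (by omega), ← this, apply_symm_apply, Fin.val_last]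
  · intro h
    have : σ.symm (Fin.last (p + b)) = ⟨p, by omega⟩ :=
      σ.symm_apply_eq.mpr (Fin.ext (by rw [← oneLine_of_lt, h, Fin.val_last]))
    simp [this]

end Recurrence

section DesPolynomial

variable (R : Type*) [CommSemiring R]

noncomputable def desPoly132 (n : ℕ) : R[X] :=
  ∑ σ : Perm (Fin n) with avoids132 σ, X ^ des σ

noncomputable def desPoly312 (n : ℕ) : R[X] :=
  ∑ σ : Perm (Fin n) with avoids312 σ, X ^ des σ

lemma sum_sum_pow_add_add {ι κ : Type*} (s : Finset ι) (t : Finset κ) (x : R) (d : ι → ℕ)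
    (e : κ → ℕ) (c : ℕ) :
    ∑ i ∈ s, ∑ j ∈ t, x ^ (d i + e j + c) =
      (∑ i ∈ s, x ^ d i) * (∑ j ∈ t, x ^ e j) * x ^ c := by
  rw [sum_mul_sum]
  simp only [sum_mul, pow_add]

lemma desPoly132_zero : desPoly132 R 0 = 1 := by
  simp [desPoly132, avoids132, des]

lemma desPoly312_zero : desPoly312 R 0 = 1 := by
  simp [desPoly312, avoids312, des]

lemma desPoly132_succ (m : ℕ) :
    desPoly132 R (m + 1) = ∑ x ∈ antidiagonal m,
      desPoly132 R x.1 * desPoly132 R x.2 * X ^ (if x.2 = 0 then 0 else 1) := by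
  simp only [desPoly132, sum_avoids132_succ, sum_sum_pow_add_add]

lemma desPoly312_eq (n : ℕ) :
    desPoly312 R n = ∑ σ : Perm (Fin n) with avoids132 σ, X ^ (n - 1 - des σ) :=
  sum_avoids312_eq _

lemma desPoly312_succ (m : ℕ) :
    desPoly312 R (m + 1) = ∑ x ∈ antidiagonal m,
      desPoly312 R x.1 * desPoly312 R x.2 * X ^ (if x.1 = 0 then 0 else 1) := by
  rw [desPoly312_eq, Nat.add_sub_cancel, sum_avoids132_succ (fun d => X ^ (m - d))]
  refine sum_congr rfl fun ⟨p, b⟩ hpb => ?_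
  have hpb : p + b = m := mem_antidiagonal.mp hpb
  rw [desPoly312_eq, desPoly312_eq, ← sum_sum_pow_add_add]
  refine sum_congr rfl fun α _ => sum_congr rfl fun β _ => congrArg _ ?_
  have := des_le α
  have := des_le β
  split_ifs <;> omega

theorem desPoly132_eq_desPoly312 (n : ℕ) : desPoly132 R n = desPoly312 R n := by
  induction n using Nat.strong_induction_on with
  | _ n ih =>
    rcases n with _ | m
    · rw [desPoly132_zero, desPoly312_zero]
    rw [desPoly132_succ, desPoly312_succ, ← Nat.sum_antidiagonal_swap]
    refine sum_congr rfl fun ⟨p, b⟩ hpb => ?_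
    have hpb : p + b = m := mem_antidiagonal.mp hpb
    rw [Prod.fst_swap, Prod.snd_swap, ih p (by omega), ih b (by omega),
      mul_comm (desPoly312 R b)]

end DesPolynomial

/-- `132` and `312` are des-Wilf equivalent. -/
theorem desWilf_132_312 :
    ∀ n : ℕ,
      ∑ σ ∈ Finset.univ.filter (fun σ : Equiv.Perm (Fin n) => avoids132 σ),
          (X : Polynomial ℤ) ^ des σ =
        ∑ σ ∈ Finset.univ.filter (fun σ : Equiv.Perm (Fin n) => avoids312 σ),
          (X : Polynomial ℤ) ^ des σ :=
  desPoly132_eq_desPoly312 ℤ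
end

section
/- A permutation σ = a_1...a_n avoids the mesh pattern (132, {(2,0)}) with exactly k descents if and only if σ is a concatenation of k+1 maximal increasing runs whose first letters, after the first run, are strictly decreasing and all runs after the first start with a letter larger than a_1's run minimum appropriately; in particular the map sending σ to the set partition of {1,...,n} whose blocks are the maximal increasing runs of σ is a bijection from such permutations to set partitions of {1,...,n} into k+1 blocks. -/
/-- `σ` avoids the mesh pattern `(132, {(2,0)})`. -/
def avoidsMesh132 {n : ℕ} (σ : Equiv.Perm (Fin n)) : Prop :=
  ∀ i j k : Fin n, i < j → j < k → σ i < σ k → σ k < σ j →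
    ∃ l : Fin n, j < l ∧ l < k ∧ σ l < σ i

/-- Positions `i` and `j` lie in the same maximal increasing run of `σ`:
every consecutive pair of positions between them is an ascent. -/
def sameRun {n : ℕ} (σ : Equiv.Perm (Fin n)) (i j : Fin n) : Prop :=
  ∀ m : Fin n, min (i : ℕ) (j : ℕ) ≤ (m : ℕ) →
    ∀ h : (m : ℕ) + 1 ≤ max (i : ℕ) (j : ℕ),
      σ m < σ ⟨(m : ℕ) + 1, lt_of_le_of_lt h (max_lt i.isLt j.isLt)⟩

instance {n : ℕ} (σ : Equiv.Perm (Fin n)) (i j : Fin n) : Decidable (sameRun σ i j) := by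
  unfold sameRun; apply Fintype.decidableForallFintype

/-- The set partition of the values `{1, …, n}` whose blocks are the sets of letters of the
maximal increasing runs of `σ`. -/
def runPartition {n : ℕ} (σ : Equiv.Perm (Fin n)) : Finset (Finset (Fin n)) :=
  Finset.univ.image (fun i : Fin n =>
    (Finset.univ.filter (fun j : Fin n => sameRun σ i j)).image σ)

open Finset

theorem Fin.strictMono_of_lt_add_one {α : Type*} [Preorder α] {n : ℕ} {f : Fin n → α}
    (h : ∀ (i : Fin n) (hi : (i : ℕ) + 1 < n), f i < f ⟨i + 1, hi⟩) : StrictMono f := by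
  cases n with
  | zero => exact fun i => i.elim0
  | succ n => exact Fin.strictMono_iff_lt_succ.2 fun i => h i.castSucc i.succ.isLt

theorem Finpartition.exists_parts_eq {α : Type*} [Fintype α] [DecidableEq α]
    {P : Finset (Finset α)} (hne : ∀ B ∈ P, B.Nonempty)
    (hdisj : (P : Set (Finset α)).PairwiseDisjoint id) (hcover : P.biUnion id = univ) :
    ∃ F : Finpartition (univ : Finset α), F.parts = P :=
  ⟨⟨P, supIndep_iff_pairwiseDisjoint.2 hdisj, by rw [sup_eq_biUnion, hcover],
    fun h => not_nonempty_empty (hne ∅ h)⟩, rfl⟩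

namespace Finpartition

variable {α : Type*} [Fintype α] [LinearOrder α] (F : Finpartition (univ : Finset α))

def blockMin (v : α) : α := (F.part v).min' (F.part_nonempty.2 (mem_univ v))

lemma blockMin_mem_part (v : α) : F.blockMin v ∈ F.part v := min'_mem _ _

lemma blockMin_le (v : α) : F.blockMin v ≤ v := min'_le _ _ (F.mem_part (mem_univ v))

lemma part_blockMin (v : α) : F.part (F.blockMin v) = F.part v :=
  F.part_eq_of_mem (F.part_mem.2 (mem_univ v)) (F.blockMin_mem_part v)

lemma blockMin_eq_blockMin_iff (v w : α) :
    F.blockMin v = F.blockMin w ↔ F.part v = F.part w := by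
  refine ⟨fun h => ?_, fun h => ?_⟩
  · rw [← F.part_blockMin v, h, F.part_blockMin]
  · unfold blockMin
    congr 1

lemma blockMin_blockMin (v : α) : F.blockMin (F.blockMin v) = F.blockMin v :=
  (F.blockMin_eq_blockMin_iff _ _).2 (F.part_blockMin v)

lemma card_parts_eq_card_blockMin_eq_self : #F.parts = #{v | F.blockMin v = v} := by
  refine (card_nbij F.part (fun v _ => F.part_mem.2 (mem_univ v)) ?_ ?_).symm
  · intro v hv w hw h
    simp only [coe_filter, mem_univ, true_and, Set.mem_ofPred_eq] at hv hw
    rw [← hv, ← hw, (F.blockMin_eq_blockMin_iff v w).2 h]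
  · intro B hB
    obtain ⟨u, -, rfl⟩ := F.part_surjOn hB
    exact ⟨F.blockMin u, by simp [blockMin_blockMin], F.part_blockMin u⟩

/-- Sorting by this key lists the blocks by decreasing minimum, each block increasingly. -/
def blockKey (v : α) : αᵒᵈ ×ₗ α := toLex (OrderDual.toDual (F.blockMin v), v)

lemma blockKey_lt_blockKey_iff (v w : α) : F.blockKey v < F.blockKey w ↔
    F.blockMin w < F.blockMin v ∨ F.blockMin v = F.blockMin w ∧ v < w := by
  simp [blockKey, Prod.Lex.toLex_lt_toLex]

lemma blockKey_injective : Function.Injective F.blockKey :=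
  fun _ _ h => congrArg (fun x => (ofLex x).2) h

variable {F} {ι : Type*} [LinearOrder ι] {σ : ι ≃ α} {i j : ι}

lemma antitone_blockMin_comp (hσ : StrictMono (F.blockKey ∘ σ)) :
    Antitone (F.blockMin ∘ σ) := by
  intro i j hij
  rcases hij.lt_or_eq with hij | rfl
  · rcases (F.blockKey_lt_blockKey_iff _ _).1 (hσ hij) with h | h
    · exact h.le
    · exact h.1.ge
  · rfl

lemma apply_lt_apply_of_blockMin_eq (hσ : StrictMono (F.blockKey ∘ σ)) (hij : i < j)
    (h : F.blockMin (σ i) = F.blockMin (σ j)) : σ i < σ j :=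
  (((F.blockKey_lt_blockKey_iff _ _).1 (hσ hij)).resolve_left h.not_gt).2

lemma blockMin_lt_blockMin_of_apply_lt (hσ : StrictMono (F.blockKey ∘ σ)) (hij : i < j)
    (h : σ j < σ i) : F.blockMin (σ j) < F.blockMin (σ i) :=
  ((F.blockKey_lt_blockKey_iff _ _).1 (hσ hij)).resolve_right fun h' => h'.2.not_gt h

lemma blockMin_apply_eq_self_iff (hσ : StrictMono (F.blockKey ∘ σ)) (j : ι) :
    F.blockMin (σ j) = σ j ↔ ∀ i < j, F.blockMin (σ j) < F.blockMin (σ i) := by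
  constructor
  · intro hj i hij
    refine (antitone_blockMin_comp hσ hij.le).lt_of_ne fun h => ?_
    exact (apply_lt_apply_of_blockMin_eq hσ hij h.symm).not_ge
      ((hj.symm.trans h).trans_le (F.blockMin_le _))
  · intro h
    obtain ⟨l, hl⟩ := σ.surjective (F.blockMin (σ j))
    have hml : F.blockMin (σ l) = F.blockMin (σ j) := by rw [hl, F.blockMin_blockMin]
    rcases lt_trichotomy l j with hlj | rfl | hjl
    · exact absurd hml (h l hlj).ne'
    · exact hl.symm
    · exact absurd (apply_lt_apply_of_blockMin_eq hσ hjl hml.symm)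
        (hl ▸ (F.blockMin_le (σ j))).not_gt

end Finpartition

section Runs

variable {n : ℕ} {σ : Equiv.Perm (Fin n)}

lemma sameRun_refl (σ : Equiv.Perm (Fin n)) (i : Fin n) : sameRun σ i i :=
  fun m h₁ h₂ => absurd h₂ (by omega)

lemma sameRun.symm {i j : Fin n} (h : sameRun σ i j) : sameRun σ j i :=
  fun m h₁ h₂ => h m (by omega) (by omega)

lemma sameRun.trans {i j k : Fin n} (hij : sameRun σ i j) (hjk : sameRun σ j k) :
    sameRun σ i k := by
  intro m h₁ h₂
  by_cases hm : min (i : ℕ) j ≤ m ∧ (m : ℕ) + 1 ≤ max (i : ℕ) j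
  · exact hij m hm.1 hm.2
  · exact hjk m (by omega) (by omega)

lemma sameRun_comm {i j : Fin n} : sameRun σ i j ↔ sameRun σ j i :=
  ⟨sameRun.symm, sameRun.symm⟩

lemma sameRun_of_lt_apply_add_one {t : Fin n} (ht : (t : ℕ) + 1 < n)
    (h : σ t < σ ⟨t + 1, ht⟩) : sameRun σ t ⟨t + 1, ht⟩ := by
  intro m h₁ h₂
  obtain rfl : m = t := Fin.ext (by dsimp only at h₁ h₂; omega)
  exact h

def runSetoid (σ : Equiv.Perm (Fin n)) : Setoid (Fin n) where
  r v w := sameRun σ (σ.symm v) (σ.symm w)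
  iseqv := ⟨fun _ => sameRun_refl σ _, sameRun.symm, sameRun.trans⟩

instance (σ : Equiv.Perm (Fin n)) : DecidableRel (runSetoid σ) :=
  fun _ _ => inferInstanceAs (Decidable (sameRun σ _ _))

def runFinpartition (σ : Equiv.Perm (Fin n)) : Finpartition (univ : Finset (Fin n)) :=
  Finpartition.ofSetoid (runSetoid σ)

lemma apply_mem_part_runFinpartition_iff {i j : Fin n} :
    σ j ∈ (runFinpartition σ).part (σ i) ↔ sameRun σ i j := by
  rw [runFinpartition, Finpartition.mem_part_ofSetoid_iff_rel]
  change sameRun σ (σ.symm (σ i)) (σ.symm (σ j)) ↔ _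
  simp only [Equiv.symm_apply_apply]

end Runs

section Avoidance

variable {n : ℕ} {σ : Equiv.Perm (Fin n)}

/-- Otherwise `σ i, σ d, σ (d + 1)` would be an occurrence of `132` with no room for the
required smaller letter between its last two positions. -/
lemma avoidsMesh132.apply_add_one_lt (hav : avoidsMesh132 σ) {i d : Fin n} (hid : i ≤ d)
    (hd : (d : ℕ) + 1 < n) (hdesc : σ ⟨d + 1, hd⟩ < σ d) : σ ⟨d + 1, hd⟩ < σ i := by
  rcases hid.lt_or_eq with hid | rfl
  · refine lt_of_not_ge fun hle => ?_
    have hne : i ≠ ⟨d + 1, hd⟩ := (hid.trans (Fin.lt_def.2 (Nat.lt_add_one _))).ne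
    obtain ⟨l, hdl, hl, -⟩ := hav i d ⟨d + 1, hd⟩ hid (Fin.lt_def.2 (Nat.lt_add_one _))
      (hle.lt_of_ne (σ.injective.ne hne)) hdesc
    rw [Fin.lt_def] at hdl hl
    dsimp only at hl
    omega
  · exact hdesc

theorem strictMono_blockKey_runFinpartition (hav : avoidsMesh132 σ) :
    StrictMono ((runFinpartition σ).blockKey ∘ σ) := by
  set F := runFinpartition σ
  refine Fin.strictMono_of_lt_add_one fun t ht => ?_
  simp only [Function.comp_apply, Finpartition.blockKey_lt_blockKey_iff]
  have hne : t ≠ ⟨t + 1, ht⟩ := Fin.ne_of_val_ne (Nat.lt_add_one _).ne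
  rcases lt_or_gt_of_ne (σ.injective.ne hne) with hasc | hdesc
  · refine Or.inr ⟨(F.blockMin_eq_blockMin_iff _ _).2 ?_, hasc⟩
    exact (F.part_eq_of_mem (F.part_mem.2 (mem_univ _))
      (apply_mem_part_runFinpartition_iff.2 (sameRun_of_lt_apply_add_one ht hasc))).symm
  · left
    obtain ⟨j, hj⟩ := σ.surjective (F.blockMin (σ t))
    have hrun : sameRun σ t j :=
      apply_mem_part_runFinpartition_iff.1 (hj ▸ F.blockMin_mem_part _)
    have hjt : j ≤ t := le_of_not_gt fun htj =>
      (hrun t (min_le_left _ _) (by rw [Fin.lt_def] at htj; omega)).not_gt hdesc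
    calc F.blockMin (σ ⟨t + 1, ht⟩) ≤ σ ⟨t + 1, ht⟩ := F.blockMin_le _
      _ < σ j := hav.apply_add_one_lt hjt ht hdesc
      _ = F.blockMin (σ t) := hj

end Avoidance

section Sorted

open Finpartition

variable {n : ℕ} {F : Finpartition (univ : Finset (Fin n))} {σ : Equiv.Perm (Fin n)}

lemma blockMin_apply_add_one_eq_self_iff (hσ : StrictMono (F.blockKey ∘ σ)) (d : Fin n)
    (hd : (d : ℕ) + 1 < n) :
    F.blockMin (σ ⟨d + 1, hd⟩) = σ ⟨d + 1, hd⟩ ↔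
      F.blockMin (σ ⟨d + 1, hd⟩) < F.blockMin (σ d) := by
  rw [blockMin_apply_eq_self_iff hσ]
  refine ⟨fun h => h d (Fin.lt_def.2 (Nat.lt_add_one _)), fun h i hi => ?_⟩
  exact h.trans_le
    (antitone_blockMin_comp hσ (Fin.le_def.2 (Nat.lt_add_one_iff.1 (Fin.lt_def.1 hi))))

lemma apply_add_one_lt_iff (hσ : StrictMono (F.blockKey ∘ σ)) (d : Fin n)
    (hd : (d : ℕ) + 1 < n) :
    σ ⟨d + 1, hd⟩ < σ d ↔ F.blockMin (σ ⟨d + 1, hd⟩) < F.blockMin (σ d) := by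
  refine ⟨blockMin_lt_blockMin_of_apply_lt hσ (Fin.lt_def.2 (Nat.lt_add_one _)), fun h => ?_⟩
  calc σ ⟨d + 1, hd⟩ = F.blockMin (σ ⟨d + 1, hd⟩) :=
        ((blockMin_apply_add_one_eq_self_iff hσ d hd).2 h).symm
    _ < F.blockMin (σ d) := h
    _ ≤ σ d := F.blockMin_le _

theorem avoidsMesh132_of_strictMono_blockKey (hσ : StrictMono (F.blockKey ∘ σ)) :
    avoidsMesh132 σ := by
  intro i j k hij hjk hik hkj
  obtain ⟨l, hl⟩ := σ.surjective (F.blockMin (σ k))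
  have hml : F.blockMin (σ l) = F.blockMin (σ k) := by rw [hl, F.blockMin_blockMin]
  have hkj' := blockMin_lt_blockMin_of_apply_lt hσ hjk hkj
  have hjl : j < l := lt_of_not_ge fun hlj =>
    (antitone_blockMin_comp hσ hlj).not_gt (hml.trans_lt hkj')
  have hlk : l ≤ k := le_of_not_gt fun hkl =>
    (apply_lt_apply_of_blockMin_eq hσ hkl hml.symm).not_ge (hl ▸ F.blockMin_le _)
  have hli : σ l < σ i := calc
    σ l = F.blockMin (σ k) := hl
    _ < F.blockMin (σ j) := hkj'
    _ ≤ F.blockMin (σ i) := antitone_blockMin_comp hσ hij.le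
    _ ≤ σ i := F.blockMin_le _
  refine ⟨l, hjl, hlk.lt_of_ne ?_, hli⟩
  rintro rfl
  exact hli.not_gt hik

lemma sameRun_iff_blockMin_eq_of_le (hσ : StrictMono (F.blockKey ∘ σ)) {i j : Fin n}
    (hij : i ≤ j) : sameRun σ i j ↔ F.blockMin (σ i) = F.blockMin (σ j) := by
  rw [Fin.le_def] at hij
  constructor
  · intro hrun
    by_contra hne
    have hlt := (antitone_blockMin_comp hσ (Fin.le_def.2 hij)).lt_of_ne' hne
    obtain ⟨l, hl⟩ := σ.surjective (F.blockMin (σ j))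
    have hml : F.blockMin (σ l) = F.blockMin (σ j) := by rw [hl, F.blockMin_blockMin]
    have hil : i < l := lt_of_not_ge fun hli =>
      (antitone_blockMin_comp hσ hli).not_gt (hml.trans_lt hlt)
    have hlj : l ≤ j := le_of_not_gt fun hjl =>
      (apply_lt_apply_of_blockMin_eq hσ hjl hml.symm).not_ge (hl ▸ F.blockMin_le _)
    rw [Fin.lt_def] at hil
    rw [Fin.le_def] at hlj
    -- the block minimum of `σ j` starts a run at a position `l` with `i < l ≤ j`
    obtain ⟨d, hd, rfl⟩ : ∃ (d : Fin n) (hd : (d : ℕ) + 1 < n), (⟨d + 1, hd⟩ : Fin n) = l :=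
      ⟨⟨l - 1, by omega⟩, by dsimp only; omega, Fin.ext (by dsimp only; omega)⟩
    have hdesc := (apply_add_one_lt_iff hσ d hd).2
      ((blockMin_apply_add_one_eq_self_iff hσ d hd).1 (hml.trans hl.symm))
    exact (hrun d (by dsimp only at hil; omega) (by dsimp only at hlj; omega)).not_gt hdesc
  · intro heq m h₁ h₂
    have hm : (m : ℕ) + 1 < n := by omega
    refine apply_lt_apply_of_blockMin_eq hσ (Fin.lt_def.2 (Nat.lt_add_one _)) (le_antisymm ?_ ?_)
    · calc F.blockMin (σ m) ≤ F.blockMin (σ i) :=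
            antitone_blockMin_comp hσ (Fin.le_def.2 (by omega))
        _ = F.blockMin (σ j) := heq
        _ ≤ F.blockMin (σ ⟨m + 1, hm⟩) :=
          antitone_blockMin_comp hσ (Fin.le_def.2 (by dsimp only; omega))
    · exact antitone_blockMin_comp hσ (Fin.le_def.2 (Nat.le_succ _))

lemma sameRun_iff_blockMin_eq (hσ : StrictMono (F.blockKey ∘ σ)) (i j : Fin n) :
    sameRun σ i j ↔ F.blockMin (σ i) = F.blockMin (σ j) := by
  rcases le_total i j with hij | hji
  · exact sameRun_iff_blockMin_eq_of_le hσ hij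
  · rw [sameRun_comm, eq_comm]
    exact sameRun_iff_blockMin_eq_of_le hσ hji

theorem runPartition_eq_parts (hσ : StrictMono (F.blockKey ∘ σ)) :
    runPartition σ = F.parts := by
  have hrun : ∀ i, (univ.filter (fun j => sameRun σ i j)).image σ = F.part (σ i) := by
    intro i
    ext v
    obtain ⟨j, rfl⟩ := σ.surjective v
    simp only [mem_image, mem_filter, mem_univ, true_and, σ.injective.eq_iff, exists_eq_right,
      sameRun_iff_blockMin_eq hσ, F.blockMin_eq_blockMin_iff]
    exact eq_comm.trans (F.mem_part_iff_part_eq_part (mem_univ _) (mem_univ _)).symm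
  ext B
  simp only [runPartition, hrun, mem_image, mem_univ, true_and]
  constructor
  · rintro ⟨i, rfl⟩
    exact F.part_mem.2 (mem_univ _)
  · intro hB
    obtain ⟨v, -, rfl⟩ := F.part_surjOn hB
    exact ⟨σ.symm v, by simp⟩

lemma des_eq_card_filter (σ : Equiv.Perm (Fin (n + 1))) :
    des σ = #{i : Fin n | σ i.succ < σ i.castSucc} := by
  rw [des, card_filter, card_filter, Fin.sum_univ_castSucc, if_neg (by simp), add_zero]
  exact sum_congr rfl fun i _ =>
    if_congr ⟨fun ⟨_, h⟩ => h, fun h => ⟨i.succ.isLt, h⟩⟩ rfl rfl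

theorem des_add_one_eq_card_parts (hn : 0 < n) (hσ : StrictMono (F.blockKey ∘ σ)) :
    des σ + 1 = #F.parts := by
  obtain ⟨n, rfl⟩ := Nat.exists_eq_add_one_of_ne_zero hn.ne'
  have hstart : ∀ i : Fin n, F.blockMin (σ i.succ) = σ i.succ ↔ σ i.succ < σ i.castSucc :=
    fun i => (blockMin_apply_add_one_eq_self_iff hσ i.castSucc i.succ.isLt).trans
      (apply_add_one_lt_iff hσ i.castSucc i.succ.isLt).symm
  have hzero : F.blockMin (σ 0) = σ 0 :=
    (blockMin_apply_eq_self_iff hσ 0).2 fun i hi => absurd hi (Fin.not_lt_zero i)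
  rw [F.card_parts_eq_card_blockMin_eq_self,
    ← card_equiv σ (s := {i | F.blockMin (σ i) = σ i}) (by simp), Fin.card_filter_univ_succ,
    if_pos hzero, des_eq_card_filter]
  simp only [hstart]

end Sorted

lemma Finpartition.strictMono_blockKey_comp_iff {n : ℕ} (F : Finpartition (univ : Finset (Fin n)))
    (σ : Equiv.Perm (Fin n)) : StrictMono (F.blockKey ∘ σ) ↔ σ = Tuple.sort F.blockKey := by
  rw [Tuple.eq_sort_iff]
  refine ⟨fun h => ⟨h.monotone, fun i j hij heq => ?_⟩,
    fun h => h.1.strictMono_of_injective (F.blockKey_injective.comp σ.injective)⟩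
  exact absurd (σ.injective (F.blockKey_injective heq)) hij.ne

/-- The map sending a permutation avoiding the mesh pattern `(132,{(2,0)})` with exactly `k`
descents to the set partition whose blocks are its maximal increasing runs is a bijection onto
the set partitions of `{1, …, n}` into `k + 1` nonempty blocks. -/
theorem runPartition_bijOn (n k : ℕ) (hn : 1 ≤ n) :
    Set.BijOn (runPartition (n := n))
      {σ : Equiv.Perm (Fin n) | avoidsMesh132 σ ∧ des σ = k}
      {P : Finset (Finset (Fin n)) | P.card = k + 1 ∧ (∀ B ∈ P, B.Nonempty) ∧
        (P : Set (Finset (Fin n))).PairwiseDisjoint id ∧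
        P.biUnion id = Finset.univ} := by
  refine ⟨?_, ?_, ?_⟩
  · rintro σ ⟨hav, rfl⟩
    have hσ := strictMono_blockKey_runFinpartition hav
    rw [Set.mem_ofPred_eq, runPartition_eq_parts hσ, ← des_add_one_eq_card_parts hn hσ]
    exact ⟨rfl, fun _ => Finpartition.nonempty_of_mem_parts _, Finpartition.disjoint _,
      Finpartition.biUnion_parts _⟩
  · rintro σ ⟨havσ, -⟩ τ ⟨havτ, -⟩ h
    have hσ := strictMono_blockKey_runFinpartition havσ
    have hτ := strictMono_blockKey_runFinpartition havτ
    have hF : runFinpartition σ = runFinpartition τ :=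
      Finpartition.ext (by rw [← runPartition_eq_parts hσ, ← runPartition_eq_parts hτ, h])
    rw [Finpartition.strictMono_blockKey_comp_iff, hF] at hσ
    rw [Finpartition.strictMono_blockKey_comp_iff] at hτ
    exact hσ.trans hτ.symm
  · rintro P ⟨hcard, hne, hdisj, hcover⟩
    obtain ⟨F, rfl⟩ := Finpartition.exists_parts_eq hne hdisj hcover
    have hσ := (F.strictMono_blockKey_comp_iff _).2 rfl
    refine ⟨_, ⟨avoidsMesh132_of_strictMono_blockKey hσ, ?_⟩, runPartition_eq_parts hσ⟩
    have := des_add_one_eq_card_parts hn hσ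
    omega
end

section
/- If σ = a_1...a_n avoids both 321 and the mesh pattern (231,{(1,0)}), then the subsequence of σ consisting of all letters that are not descent tops is increasing. -/
/-!
A letter `a_i` that is not a descent top satisfies `a_i < a_{i+1}`. If some later letter `a_j`
were smaller than `a_i`, then `a_i a_{i+1} a_j` would be an occurrence of `231` with no position
strictly between its first two letters, so the mesh pattern `(231,{(1,0)})` would occur. Hence a
non-descent-top is smaller than every letter after it.
-/

def avoids321 {n : ℕ} (σ : Equiv.Perm (Fin n)) : Prop :=
  ¬ ∃ i j k : Fin n, i < j ∧ j < k ∧ σ j < σ i ∧ σ k < σ j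

def avoidsMesh231 {n : ℕ} (σ : Equiv.Perm (Fin n)) : Prop :=
  ∀ i j k : Fin n, i < j → j < k → σ k < σ i → σ i < σ j →
    ∃ l : Fin n, i < l ∧ l < j ∧ σ l < σ k

/-- The letter at position `i` is a descent top. -/
def DescTopAt {n : ℕ} (σ : Equiv.Perm (Fin n)) (i : Fin n) : Prop :=
  ∃ h : (i : ℕ) + 1 < n, σ ⟨(i : ℕ) + 1, h⟩ < σ i

variable {n : ℕ} {σ : Equiv.Perm (Fin n)} {i j : Fin n}

theorem lt_succ_of_not_descTopAt (hi : ¬ DescTopAt σ i) (h : (i : ℕ) + 1 < n) :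
    σ i < σ ⟨(i : ℕ) + 1, h⟩ := by
  refine lt_of_le_of_ne (not_lt.mp fun hlt => hi ⟨h, hlt⟩) fun heq => ?_
  have := congrArg Fin.val (σ.injective heq)
  simp at this

theorem avoidsMesh231.lt_of_not_descTopAt (hσ : avoidsMesh231 σ) (hi : ¬ DescTopAt σ i)
    (hij : i < j) : σ i < σ j := by
  have h : (i : ℕ) + 1 < n := by omega
  set i' : Fin n := ⟨(i : ℕ) + 1, h⟩
  have hii' : i < i' := Fin.lt_def.mpr (Nat.lt_succ_self _)
  have hσii' : σ i < σ i' := lt_succ_of_not_descTopAt hi h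
  obtain hi'j | hi'j : i' = j ∨ i' < j := eq_or_lt_of_le (Fin.le_def.mpr hij)
  · exact hi'j ▸ hσii'
  · refine lt_of_le_of_ne (not_lt.mp fun hσji => ?_) (σ.injective.ne hij.ne)
    obtain ⟨l, hil, hli', -⟩ := hσ i i' j hii' hi'j hσji hσii'
    exact hli'.not_ge hil

theorem nonDescTops_increasing_general (n : ℕ) (σ : Equiv.Perm (Fin n))
    (h2 : avoidsMesh231 σ) :
    ∀ i j : Fin n, i < j → ¬ DescTopAt σ i → ¬ DescTopAt σ j → σ i < σ j :=
  fun _ _ hij hi _ => h2.lt_of_not_descTopAt hi hij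

/-- In a permutation avoiding `321` and the mesh pattern `(231,{(1,0)})`, the subsequence of
letters that are not descent tops is increasing. -/
theorem nonDescTops_increasing (n : ℕ) (σ : Equiv.Perm (Fin n))
    (h1 : avoids321 σ) (h2 : avoidsMesh231 σ) :
    ∀ i j : Fin n, i < j → ¬ DescTopAt σ i → ¬ DescTopAt σ j → σ i < σ j :=
  nonDescTops_increasing_general n σ h2
end

section
/- For n ≥ 2, a permutation σ = a_1...a_n avoids the barred pattern bar1bar243 if and only if a_1 = 1 and a_2 = 2. Consequently |Av_n(bar1bar243)| = (n-2)!. -/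
/-!
In a permutation avoiding `bar1 bar2 4 3`, an entry in the first two positions cannot be the `4`
of an inversion, since the `bar1 bar2` part needs two earlier positions. So the first two entries
are smaller than everything after them, which forces `a_1 = 1` and `a_2 = 2`. Conversely, if
`a_1 = 1` and `a_2 = 2`, every inversion `a_i a_j` has `i ≥ 3` and `a_j ≥ 3`, so `a_1 a_2`
completes it to a `1243`. The avoiders are then the permutations of the last `n - 2` positions.
-/

/-- `σ` avoids the barred pattern `bar1 bar2 4 3`: every occurrence `a_i a_j` of `21`
extends on the left to an occurrence `a_k a_l a_i a_j` of `1243` with `k < l < i`. -/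
def avoidsBar1243 {n : ℕ} (σ : Equiv.Perm (Fin n)) : Prop :=
  ∀ i j : Fin n, i < j → σ j < σ i →
    ∃ k l : Fin n, k < l ∧ l < i ∧ σ k < σ l ∧ σ l < σ j

namespace Equiv.Perm

variable {n : ℕ} {σ : Perm (Fin n)}

theorem apply_eq_self_of_lt_apply {i : Fin n} (hfix : ∀ j < i, σ j = j)
    (hmin : ∀ j, i < j → σ i < σ j) : σ i = i := by
  rcases lt_trichotomy (σ.symm i) i with hlt | heq | hgt
  · exact absurd ((hfix _ hlt).symm.trans (σ.apply_symm_apply i)) hlt.ne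
  · exact σ.eq_symm_apply.mp heq.symm
  · have hσi : σ i < i := by simpa using hmin _ hgt
    exact absurd (σ.injective (hfix _ hσi)) hσi.ne

theorem apply_eq_self_of_forall_lt_apply {m : ℕ}
    (hmin : ∀ i j : Fin n, (i : ℕ) < m → i < j → σ i < σ j) (i : Fin n) (hi : (i : ℕ) < m) :
    σ i = i := by
  induction i using WellFoundedLT.induction with
  | ind i ih =>
    refine apply_eq_self_of_lt_apply (fun j hj => ih j hj ?_) (hmin i · hi)
    exact lt_trans (Fin.lt_def.mp hj) hi

theorem le_apply_of_forall_lt_apply_eq_self {m : ℕ} (hfix : ∀ x : Fin n, (x : ℕ) < m → σ x = x)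
    {x : Fin n} (hx : m ≤ x) : m ≤ σ x := by
  by_contra! hσx
  have := σ.injective (hfix _ hσx)
  omega

theorem lt_apply_of_avoidsBar1243 (h : avoidsBar1243 σ) {i j : Fin n} (hi : (i : ℕ) < 2)
    (hij : i < j) : σ i < σ j := by
  by_contra! hle
  obtain ⟨k, l, hkl, hli, -, -⟩ := h i j hij (hle.lt_of_ne (σ.injective.ne hij.ne'))
  rw [Fin.lt_def] at hkl hli
  omega

theorem avoidsBar1243_of_forall_lt_two_apply_eq_self
    (hfix : ∀ x : Fin n, (x : ℕ) < 2 → σ x = x) : avoidsBar1243 σ := by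
  intro i j hij hji
  have hi : 2 ≤ (i : ℕ) := by
    by_contra! hi
    have hσi : σ i = i := hfix i hi
    have hσj : (σ j : ℕ) < 2 := by rw [Fin.lt_def, hσi] at hji; omega
    have hj : σ j = j := σ.injective (hfix _ hσj)
    rw [hj, hσi] at hji
    exact absurd hij hji.not_gt
  have hσj : 2 ≤ (σ j : ℕ) := le_apply_of_forall_lt_apply_eq_self hfix (by omega)
  have hn : 2 < n := lt_of_le_of_lt hi i.isLt
  refine ⟨⟨0, by omega⟩, ⟨1, by omega⟩, ?_, ?_, ?_, ?_⟩ <;>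
    simp only [Fin.lt_def, hfix ⟨0, by omega⟩ (by simp), hfix ⟨1, by omega⟩ (by simp)] <;>
    omega

theorem avoidsBar1243_iff_forall_lt_two_apply_eq_self :
    avoidsBar1243 σ ↔ ∀ x : Fin n, (x : ℕ) < 2 → σ x = x :=
  ⟨fun h => apply_eq_self_of_forall_lt_apply fun _ _ hi hij => lt_apply_of_avoidsBar1243 h hi hij,
    avoidsBar1243_of_forall_lt_two_apply_eq_self⟩

theorem card_forall_lt_apply_eq_self {m : ℕ} (hm : m ≤ n) :
    Nat.card {σ : Perm (Fin n) // ∀ x : Fin n, (x : ℕ) < m → σ x = x} = (n - m).factorial := by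
  calc _ = Nat.card (Perm {x : Fin n // ¬(x : ℕ) < m}) :=
        Nat.card_congr ((Perm.subtypeEquivSubtypePerm _).trans
          (Equiv.subtypeEquivRight fun _ => by simp only [not_not])).symm
    _ = (n - m).factorial := by
      rw [Nat.card_perm, Nat.card_eq_fintype_card, Fintype.card_subtype_compl,
        Fintype.card_fin_lt_of_le hm, Fintype.card_fin]

end Equiv.Perm

open Equiv.Perm in
theorem avoidsBar1243_iff (n : ℕ) (hn : 2 ≤ n) :
    (∀ σ : Equiv.Perm (Fin n),
      avoidsBar1243 σ ↔
        σ ⟨0, by omega⟩ = ⟨0, by omega⟩ ∧ σ ⟨1, by omega⟩ = ⟨1, by omega⟩) ∧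
    Nat.card {σ : Equiv.Perm (Fin n) // avoidsBar1243 σ} = Nat.factorial (n - 2) := by
  refine ⟨fun σ => ?_, ?_⟩
  · rw [avoidsBar1243_iff_forall_lt_two_apply_eq_self]
    refine ⟨fun h => ⟨h _ (by simp), h _ (by simp)⟩, ?_⟩
    rintro ⟨h0, h1⟩ ⟨x, hxn⟩ hx
    interval_cases x <;> assumption
  · rw [← card_forall_lt_apply_eq_self hn]
    exact Nat.card_congr
      (Equiv.subtypeEquivRight fun _ => avoidsBar1243_iff_forall_lt_two_apply_eq_self)
end

section
/- For n ≥ 2, the descent generating function over permutations of {1,...,n} avoiding the barred pattern bar1bar243 equals the Eulerian polynomial A_{n-2}(q): ∑_{σ ∈ Av_n(bar1bar243)} q^{des σ} = ∑_{τ ∈ S_{n-2}} q^{des τ}. -/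
open Polynomial

instance {n : ℕ} : DecidablePred (avoidsBar1243 (n := n)) := fun σ => by
  unfold avoidsBar1243; apply Fintype.decidableForallFintype

/-!
A permutation avoids `bar1bar243` exactly when it fixes `1` and `2`. Indeed an inversion at
positions `i < j` must be preceded by an ascent at positions `k < l < i`, so `i ≥ 3`: the
first two letters are smaller than every later letter, which forces them to be `1, 2`.
Conversely these two letters supply the required ascent for every inversion, since no
inversion involves them. Such permutations are the direct sums `12 ⊕ τ` with `τ ∈ S_{n-2}`,
and the descents of `12 ⊕ τ` are those of `τ` shifted by two.
-/

open Equiv Finset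

section FixesPrefix

variable {n : ℕ}

-- Reducible, so that rewriting with it matches the unfolded `des`.
abbrev IsDescent (σ : Perm (Fin n)) (i : Fin n) : Prop :=
  ∃ h : (i : ℕ) + 1 < n, σ ⟨(i : ℕ) + 1, h⟩ < σ i

def FixesPrefix (k : ℕ) (σ : Perm (Fin n)) : Prop :=
  ∀ i : Fin n, (i : ℕ) < k → σ i = i

variable {k : ℕ} {σ : Perm (Fin n)}

theorem FixesPrefix.le_apply_iff (hσ : FixesPrefix k σ) (x : Fin n) :
    k ≤ (σ x : ℕ) ↔ k ≤ (x : ℕ) := by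
  constructor
  · intro hx
    by_contra! hxk
    rw [hσ x hxk] at hx
    omega
  · intro hx
    by_contra! hσx
    have : σ x = x := σ.injective (hσ _ hσx)
    omega

theorem FixesPrefix.apply_lt_apply (hσ : FixesPrefix k σ) {i j : Fin n} (hi : (i : ℕ) < k)
    (hij : i < j) : σ i < σ j := by
  rw [hσ i hi]
  by_cases hj : (j : ℕ) < k
  · rwa [hσ j hj]
  · have := (hσ.le_apply_iff j).2 (by omega)
    rw [Fin.lt_def]
    omega

/-- By strong induction on `i`: the values below `i` are taken at the fixed points `i' < i`, so
`σ i ≥ i`; and `σ⁻¹ i ≥ i` for the same reason, so `σ i ≤ σ (σ⁻¹ i) = i`. -/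
theorem FixesPrefix.of_forall_apply_lt
    (h : ∀ i j : Fin n, (i : ℕ) < k → i < j → σ i < σ j) : FixesPrefix k σ := by
  intro i
  induction i using WellFoundedLT.induction with
  | _ i ih =>
    intro hi
    have hge : ¬ σ i < i := fun hlt =>
      hlt.ne (σ.injective (ih _ hlt (lt_of_le_of_lt (Fin.le_def.1 hlt.le) hi)))
    have hle : σ i ≤ i := by
      obtain hj | hj | hj := lt_trichotomy (σ.symm i) i
      · have := ih _ hj (by rw [Fin.lt_def] at hj; omega)
        rw [apply_symm_apply] at this
        exact (hj.ne this.symm).elim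
      · exact ((symm_apply_eq σ).1 hj).ge
      · simpa using (h i _ hi hj).le
    exact le_antisymm hle (not_lt.1 hge)

theorem FixesPrefix.not_isDescent (hσ : FixesPrefix k σ) {i : Fin n} (hi : (i : ℕ) < k) :
    ¬ IsDescent σ i :=
  fun ⟨_, hlt⟩ => (hσ.apply_lt_apply hi (Fin.lt_def.2 (Nat.lt_succ_self _))).not_gt hlt

theorem fixesPrefix_iff_forall_apply_lt :
    FixesPrefix k σ ↔ ∀ i j : Fin n, (i : ℕ) < k → i < j → σ i < σ j :=
  ⟨fun hσ _ _ => hσ.apply_lt_apply, FixesPrefix.of_forall_apply_lt⟩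

end FixesPrefix

theorem avoidsBar1243_iff_fixesPrefix_two {n : ℕ} (σ : Perm (Fin n)) :
    avoidsBar1243 σ ↔ FixesPrefix 2 σ := by
  rw [fixesPrefix_iff_forall_apply_lt]
  constructor
  · intro hσ i j hi hij
    refine lt_of_le_of_ne (not_lt.1 fun hji => ?_) (σ.injective.ne hij.ne)
    obtain ⟨k, l, hkl, hli, -⟩ := hσ i j hij hji
    rw [Fin.lt_def] at hkl hli
    omega
  · intro hσ i j hij hji
    have hσ' := FixesPrefix.of_forall_apply_lt hσ
    have hi : 2 ≤ (i : ℕ) := by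
      by_contra! hi
      exact (hσ i j hi hij).not_gt hji
    have hj : 2 ≤ (σ j : ℕ) := (hσ'.le_apply_iff j).2 (by rw [Fin.lt_def] at hij; omega)
    refine ⟨⟨0, by omega⟩, ⟨1, by omega⟩, Fin.mk_lt_mk.2 one_pos, Fin.mk_lt_mk.2 (by omega), ?_⟩
    rw [hσ' ⟨0, _⟩ two_pos, hσ' ⟨1, _⟩ one_lt_two, Fin.lt_def, Fin.lt_def]
    exact ⟨one_pos, hj⟩

section FixPrefix

variable {k m : ℕ}

@[simps]
def natAddEquivSubtype (k m : ℕ) : Fin m ≃ {j : Fin (k + m) // k ≤ (j : ℕ)} where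
  toFun b := ⟨Fin.natAdd k b, Nat.le_add_right k b⟩
  invFun j := ⟨j.1 - k, by omega⟩
  left_inv b := by ext; simp
  right_inv j := by ext; simp; omega

/-- The direct sum `id_k ⊕ τ`. -/
def fixPrefix (k : ℕ) (τ : Perm (Fin m)) : Perm (Fin (k + m)) :=
  Perm.ofSubtype ((natAddEquivSubtype k m).permCongr τ)

theorem fixPrefix_injective : Function.Injective (fixPrefix (m := m) k) :=
  Perm.ofSubtype_injective.comp (Equiv.injective _)

theorem fixesPrefix_fixPrefix (τ : Perm (Fin m)) : FixesPrefix k (fixPrefix k τ) :=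
  fun _ hi => Perm.ofSubtype_apply_of_not_mem _ (not_le.2 hi)

theorem fixPrefix_apply_natAdd (τ : Perm (Fin m)) (b : Fin m) :
    fixPrefix k τ (Fin.natAdd k b) = Fin.natAdd k (τ b) := by
  simpa [fixPrefix] using Perm.ofSubtype_apply_coe ((natAddEquivSubtype k m).permCongr τ)
    (natAddEquivSubtype k m b)

theorem FixesPrefix.exists_fixPrefix_eq {σ : Perm (Fin (k + m))} (hσ : FixesPrefix k σ) :
    ∃ τ, fixPrefix k τ = σ := by
  have hp : ∀ x, k ≤ (σ x : ℕ) ↔ k ≤ (x : ℕ) := hσ.le_apply_iff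
  refine ⟨(natAddEquivSubtype k m).permCongr.symm (σ.subtypePerm hp), ?_⟩
  rw [fixPrefix, apply_symm_apply]
  exact Perm.ofSubtype_subtypePerm hp fun x hx => not_lt.1 fun hxk => hx (hσ x hxk)

theorem isDescent_fixPrefix_natAdd_iff (τ : Perm (Fin m)) (b : Fin m) :
    IsDescent (fixPrefix k τ) (Fin.natAdd k b) ↔ IsDescent τ b := by
  have hnext : ∀ h : (b : ℕ) + 1 < m,
      (⟨(Fin.natAdd k b : ℕ) + 1, by simp; omega⟩ : Fin (k + m)) =
        Fin.natAdd k ⟨b + 1, h⟩ :=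
    fun _ => Fin.ext (by simp; omega)
  constructor
  · rintro ⟨h, hlt⟩
    have hb : (b : ℕ) + 1 < m := by simp at h; omega
    rw [hnext hb, fixPrefix_apply_natAdd, fixPrefix_apply_natAdd,
      Fin.natAdd_lt_natAdd_iff] at hlt
    exact ⟨hb, hlt⟩
  · rintro ⟨hb, hlt⟩
    refine ⟨by simp; omega, ?_⟩
    rwa [hnext hb, fixPrefix_apply_natAdd, fixPrefix_apply_natAdd, Fin.natAdd_lt_natAdd_iff]

theorem des_fixPrefix (τ : Perm (Fin m)) : des (fixPrefix k τ) = des τ := by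
  simp only [des, card_filter, Fin.sum_univ_add]
  rw [sum_eq_zero fun i _ => if_neg ((fixesPrefix_fixPrefix τ).not_isDescent i.2), zero_add]
  exact sum_congr rfl fun b _ => if_congr (isDescent_fixPrefix_natAdd_iff τ b) rfl rfl

end FixPrefix

theorem filter_avoidsBar1243_eq_map_fixPrefix (m : ℕ) :
    univ.filter (fun σ : Perm (Fin (2 + m)) => avoidsBar1243 σ) =
      univ.map ⟨fixPrefix 2, fixPrefix_injective⟩ := by
  ext σ
  simp only [mem_filter, mem_univ, true_and, mem_map, Function.Embedding.coeFn_mk,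
    avoidsBar1243_iff_fixesPrefix_two]
  exact ⟨FixesPrefix.exists_fixPrefix_eq, fun ⟨τ, hτ⟩ => hτ ▸ fixesPrefix_fixPrefix τ⟩

/-- The descent generating function over `Av_n(bar1 bar2 4 3)` is the Eulerian polynomial
`A_{n-2}(q)`. -/
theorem desPoly_avoidsBar1243_eq_eulerian (n : ℕ) (hn : 2 ≤ n) :
    ∑ σ ∈ Finset.univ.filter (fun σ : Equiv.Perm (Fin n) => avoidsBar1243 σ),
        (X : Polynomial ℤ) ^ des σ =
      ∑ τ : Equiv.Perm (Fin (n - 2)), (X : Polynomial ℤ) ^ des τ := by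
  obtain ⟨m, rfl⟩ := Nat.exists_eq_add_of_le hn
  rw [Nat.add_sub_cancel_left, filter_avoidsBar1243_eq_map_fixPrefix, sum_map]
  simp only [Function.Embedding.coeFn_mk, des_fixPrefix]
end

section
/- For n ≥ 2, the descent generating function over permutations of {1,...,n} avoiding the barred pattern bar132bar4 equals the Eulerian polynomial A_{n-2}(q). -/
open Polynomial

def avoidsBar1324 {n : ℕ} (σ : Equiv.Perm (Fin n)) : Prop :=
  ∀ i j : Fin n, i < j → σ j < σ i →
    ∃ k l : Fin n, k < i ∧ j < l ∧ σ k < σ j ∧ σ i < σ l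

instance {n : ℕ} : DecidablePred (avoidsBar1324 (n := n)) := fun σ => by
  unfold avoidsBar1324; apply Fintype.decidableForallFintype

/-! A permutation avoids `bar1 3 2 bar4` exactly when it fixes `0` and the last point: if
`σ 0 ≠ 0` the inversion formed by position `0` and the position of the value `0` has no
smaller entry to its left, symmetrically for the last point, and once both are fixed they
extend every inversion. Restricting such a `σ` of `Fin (m + 2)` to the interior `{1, …, m}`
and shifting by one is a bijection onto `S_m`, and it preserves descents because a descent
can neither start at `0` nor end at the last point. -/

theorem avoidsBar1324_iff {n : ℕ} (σ : Equiv.Perm (Fin (n + 1))) :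
    avoidsBar1324 σ ↔ σ 0 = 0 ∧ σ (Fin.last n) = Fin.last n := by
  constructor
  · intro hσ
    constructor
    · by_contra h0
      have hpos : 0 < σ.symm 0 := Fin.pos_iff_ne_zero.mpr fun h => h0 (σ.symm_apply_eq.mp h).symm
      obtain ⟨k, -, hk, -⟩ := hσ 0 _ hpos (by simpa using Fin.pos_iff_ne_zero.mpr h0)
      exact Fin.not_lt_zero k hk
    · by_contra hlast
      have hlt : σ.symm (Fin.last n) < Fin.last n :=
        Fin.lt_last_iff_ne_last.mpr fun h => hlast (σ.symm_apply_eq.mp h).symm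
      obtain ⟨-, l, -, hl, -⟩ := hσ _ _ hlt (by simpa using Fin.lt_last_iff_ne_last.mpr hlast)
      exact (Fin.le_last l).not_gt hl
  · rintro ⟨h0, hlast⟩ i j hij hji
    have hi : i ≠ 0 := by rintro rfl; simp [h0] at hji
    have hj : j ≠ Fin.last n := by rintro rfl; exact (Fin.le_last _).not_gt (hlast ▸ hji)
    refine ⟨0, Fin.last n, Fin.pos_iff_ne_zero.mpr hi, Fin.lt_last_iff_ne_last.mpr hj, ?_, ?_⟩
    · rw [h0, Fin.pos_iff_ne_zero, ← h0]
      exact σ.injective.ne (Fin.pos_iff_ne_zero.mp (i.zero_le.trans_lt hij))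
    · rw [hlast, Fin.lt_last_iff_ne_last, ← hlast]
      exact σ.injective.ne (Fin.lt_last_iff_ne_last.mp (hij.trans_le j.le_last))

def Fin.interiorEquiv (m : ℕ) :
    Fin m ≃ {x : Fin (m + 2) // x ≠ 0 ∧ x ≠ Fin.last (m + 1)} where
  toFun i := ⟨⟨i + 1, by omega⟩, by simp [Fin.ext_iff], by simp [Fin.ext_iff]; omega⟩
  invFun x := ⟨x.1 - 1, by
    have hx := x.2
    simp only [ne_eq, Fin.ext_iff, Fin.val_zero, Fin.val_last] at hx
    omega⟩
  left_inv i := by ext; simp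
  right_inv := by
    rintro ⟨x, h0, -⟩
    rw [ne_eq, Fin.ext_iff, Fin.val_zero] at h0
    ext
    simp only
    omega

@[simp]
theorem Fin.val_interiorEquiv {m : ℕ} (i : Fin m) : (Fin.interiorEquiv m i : ℕ) = i + 1 := rfl

theorem Fin.interiorEquiv_lt_interiorEquiv {m : ℕ} {i j : Fin m} :
    (Fin.interiorEquiv m i : Fin (m + 2)) < Fin.interiorEquiv m j ↔ i < j := by
  simp only [Fin.lt_def, Fin.val_interiorEquiv, Nat.add_lt_add_iff_right]

def Equiv.Perm.extendInterior (m : ℕ) :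
    Equiv.Perm (Fin m) ≃
      {σ : Equiv.Perm (Fin (m + 2)) // σ 0 = 0 ∧ σ (Fin.last (m + 1)) = Fin.last (m + 1)} :=
  (Fin.interiorEquiv m).permCongr.trans <| (Equiv.Perm.subtypeEquivSubtypePerm _).trans <|
    Equiv.subtypeEquivRight fun _ => by
      simp only [not_and_or, not_not, or_imp, forall_and, forall_eq]

theorem Equiv.Perm.extendInterior_apply_interiorEquiv {m : ℕ} (τ : Equiv.Perm (Fin m))
    (i : Fin m) :
    (Equiv.Perm.extendInterior m τ : Equiv.Perm (Fin (m + 2))) (Fin.interiorEquiv m i) =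
      Fin.interiorEquiv m (τ i) := by
  simp [Equiv.Perm.extendInterior]

theorem des_eq_of_apply_interiorEquiv {m : ℕ} {σ : Equiv.Perm (Fin (m + 2))}
    {τ : Equiv.Perm (Fin m)} (h0 : σ 0 = 0) (hlast : σ (Fin.last (m + 1)) = Fin.last (m + 1))
    (hστ : ∀ i, σ (Fin.interiorEquiv m i) = Fin.interiorEquiv m (τ i)) : des σ = des τ := by
  have hdes : ∀ i j : Fin m,
      σ (Fin.interiorEquiv m j) < σ (Fin.interiorEquiv m i) ↔ τ j < τ i := fun i j => by
    rw [hστ, hστ, Fin.interiorEquiv_lt_interiorEquiv]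
  unfold des
  rw [← Finset.card_map ⟨fun i => (Fin.interiorEquiv m i : Fin (m + 2)),
    Subtype.val_injective.comp (Fin.interiorEquiv m).injective⟩]
  congr 1
  ext x
  simp only [Finset.mem_filter, Finset.mem_univ, true_and, Finset.mem_map,
    Function.Embedding.coeFn_mk]
  constructor
  · rintro ⟨hx1, hdesc⟩
    have hx0 : x ≠ 0 := by
      rintro rfl
      exact Fin.not_lt_zero _ (h0 ▸ hdesc)
    have hxl : (⟨x + 1, hx1⟩ : Fin (m + 2)) ≠ Fin.last (m + 1) := by
      intro h
      rw [h, hlast] at hdesc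
      exact (Fin.le_last _).not_gt hdesc
    simp only [ne_eq, Fin.ext_iff, Fin.val_zero, Fin.val_last] at hx0 hxl
    refine ⟨⟨x - 1, by omega⟩, ⟨by simp only; omega, ?_⟩,
      Fin.ext (by simp only [Fin.val_interiorEquiv]; omega)⟩
    rw [← hdes]
    convert hdesc using 2 <;> ext <;> simp only [Fin.val_interiorEquiv] <;> omega
  · rintro ⟨i, ⟨hi, hdesc⟩, rfl⟩
    exact ⟨by simp only [Fin.val_interiorEquiv]; omega, (hdes _ _).mpr hdesc⟩

/-- The descent generating function over `Av_n(bar1 3 2 bar4)` is the Eulerian polynomial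
`A_{n-2}(q)`. -/
theorem desPoly_avoidsBar1324_eq_eulerian (n : ℕ) (hn : 2 ≤ n) :
    ∑ σ ∈ Finset.univ.filter (fun σ : Equiv.Perm (Fin n) => avoidsBar1324 σ),
        (X : Polynomial ℤ) ^ des σ =
      ∑ τ : Equiv.Perm (Fin (n - 2)), (X : Polynomial ℤ) ^ des τ := by
  obtain ⟨m, rfl⟩ : ∃ m, n = m + 2 := ⟨n - 2, by omega⟩
  rw [Nat.add_sub_cancel, Finset.sum_subtype _ (p := fun σ : Equiv.Perm (Fin (m + 2)) =>
      σ 0 = 0 ∧ σ (Fin.last (m + 1)) = Fin.last (m + 1)) fun σ => by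
    rw [Finset.mem_filter, avoidsBar1324_iff, and_iff_right (Finset.mem_univ σ)]]
  refine (Fintype.sum_equiv (Equiv.Perm.extendInterior m) _ _ fun τ => ?_).symm
  obtain ⟨h0, hlast⟩ := (Equiv.Perm.extendInterior m τ).2
  rw [des_eq_of_apply_interiorEquiv h0 hlast (Equiv.Perm.extendInterior_apply_interiorEquiv τ)]
end

section
/- For each n and k, the map that sends a permutation σ ∈ S_n avoiding {321, mesh(231,{(1,0)})} to the path whose i-th step is up if the letter at position determined by value i is a descent top, down if it is a descent bottom, and horizontal otherwise (steps indexed by values 1,...,n) is injective into the set of lattice paths of length n. -/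
/-- The value `v` is a descent top of `σ`. -/
def IsDescTop {n : ℕ} (σ : Equiv.Perm (Fin n)) (v : Fin n) : Prop :=
  ∃ i : Fin n, ∃ h : (i : ℕ) + 1 < n, σ ⟨(i : ℕ) + 1, h⟩ < σ i ∧ σ i = v

/-- The value `v` is a descent bottom of `σ`. -/
def IsDescBot {n : ℕ} (σ : Equiv.Perm (Fin n)) (v : Fin n) : Prop :=
  ∃ i : Fin n, ∃ h : (i : ℕ) + 1 < n, σ ⟨(i : ℕ) + 1, h⟩ < σ i ∧ σ ⟨(i : ℕ) + 1, h⟩ = v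

-- The lattice path associated to `σ`: its `v`-th step (steps indexed by the values
-- `1, …, n`) is up (`1`) if `v` is a descent top of `σ`, down (`-1`) if `v` is a descent
-- bottom, and horizontal (`0`) otherwise.
open Classical in
noncomputable def pathOf {n : ℕ} (σ : Equiv.Perm (Fin n)) : Fin n → ℤ :=
  fun v => if IsDescTop σ v then 1 else if IsDescBot σ v then -1 else 0

lemma Equiv.image_Ici_eq_of_eqOn_Iio {α β : Type*} [LinearOrder α] {f g : α ≃ β} {p : α}
    (h : ∀ q < p, f q = g q) : f '' Set.Ici p = g '' Set.Ici p := by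
  rw [← Set.compl_Iio, Set.image_compl_eq f.bijective, Set.image_compl_eq g.bijective,
    Set.image_congr (s := Set.Iio p) h]

variable {n : ℕ} {σ τ : Equiv.Perm (Fin n)}

lemma isDescTop_apply_iff {i : Fin n} :
    IsDescTop σ (σ i) ↔ ∃ j : Fin n, (j : ℕ) = i + 1 ∧ σ j < σ i := by
  constructor
  · rintro ⟨i', hi', hlt, heq⟩
    obtain rfl := σ.injective heq
    exact ⟨_, rfl, hlt⟩
  · rintro ⟨j, hj, hlt⟩
    have hi : (i : ℕ) + 1 < n := hj ▸ j.isLt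
    obtain rfl : j = ⟨i + 1, hi⟩ := Fin.ext hj
    exact ⟨i, hi, hlt, rfl⟩

lemma isDescBot_apply_iff {j : Fin n} :
    IsDescBot σ (σ j) ↔ ∃ i : Fin n, (j : ℕ) = i + 1 ∧ σ j < σ i := by
  constructor
  · rintro ⟨i, hi, hlt, heq⟩
    obtain rfl := σ.injective heq
    exact ⟨i, rfl, hlt⟩
  · rintro ⟨i, hj, hlt⟩
    have hi : (i : ℕ) + 1 < n := hj ▸ j.isLt
    obtain rfl : j = ⟨i + 1, hi⟩ := Fin.ext hj
    exact ⟨i, hi, hlt, rfl⟩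

lemma isDescBot_apply_iff_isDescTop_apply {j : Fin n} :
    IsDescBot σ (σ j) ↔ ∃ i : Fin n, (j : ℕ) = i + 1 ∧ IsDescTop σ (σ i) := by
  simp only [isDescBot_apply_iff, isDescTop_apply_iff]
  constructor
  · rintro ⟨i, hj, hlt⟩
    exact ⟨i, hj, j, hj, hlt⟩
  · rintro ⟨i, hj, j', hj', hlt⟩
    obtain rfl : j' = j := Fin.ext (by omega)
    exact ⟨i, hj, hlt⟩

lemma not_isDescTop_and_isDescBot (h321 : avoids321 σ) (v : Fin n) :
    ¬ (IsDescTop σ v ∧ IsDescBot σ v) := by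
  obtain ⟨j, rfl⟩ := σ.surjective v
  rintro ⟨htop, hbot⟩
  obtain ⟨k, hk, hkj⟩ := isDescTop_apply_iff.1 htop
  obtain ⟨i, hj, hji⟩ := isDescBot_apply_iff.1 hbot
  exact h321 ⟨i, j, k, by omega, by omega, hji, hkj⟩

lemma apply_lt_of_isDescTop (h321 : avoids321 σ) {p r : Fin n} (hpr : p < r)
    (hr : IsDescTop σ (σ r)) : σ p < σ r := by
  obtain ⟨k, hk, hkr⟩ := isDescTop_apply_iff.1 hr
  refine lt_of_le_of_ne (not_lt.1 fun hrp => h321 ⟨p, r, k, hpr, ?_, hrp, hkr⟩)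
    (σ.injective.ne hpr.ne)
  omega

lemma pathOf_eq_one_iff (v : Fin n) : pathOf σ v = 1 ↔ IsDescTop σ v := by
  unfold pathOf
  split_ifs <;> simp_all

lemma pathOf_eq_neg_one_iff (h321 : avoids321 σ) (v : Fin n) :
    pathOf σ v = -1 ↔ IsDescBot σ v := by
  have := not_isDescTop_and_isDescBot h321 v
  unfold pathOf
  split_ifs <;> simp_all

lemma exists_isLeast_image_Ici (σ : Equiv.Perm (Fin n)) (p : Fin n) :
    ∃ m, IsLeast (σ '' Set.Ici p) m := by
  obtain ⟨q, hpq, hq⟩ := Set.exists_min_image (Set.Ici p) σ (Set.toFinite _) Set.nonempty_Ici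
  exact ⟨σ q, Set.mem_image_of_mem σ hpq, Set.forall_mem_image.2 hq⟩

variable {p m : Fin n}

-- Otherwise the letter just before `m` forms, together with `σ p` and `m`, a `321` or a `231`
-- whose shaded box is empty.
lemma symm_le_succ_of_isLeast_image_Ici (h321 : avoids321 σ) (hmesh : avoidsMesh231 σ)
    (hm : IsLeast (σ '' Set.Ici p) m) : (σ.symm m : ℕ) ≤ p + 1 := by
  obtain ⟨q, hpq, rfl⟩ := hm.1
  have hmin : ∀ r, p ≤ r → σ q ≤ σ r := fun r hr => hm.2 ⟨r, hr, rfl⟩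
  rw [Equiv.symm_apply_apply]
  by_contra! hq
  set j : Fin n := ⟨q - 1, by omega⟩
  have hpj : p < j := by simp only [Fin.lt_def, j]; omega
  have hjq : j < q := by simp only [Fin.lt_def, j]; omega
  have hqj : σ q < σ j := (hmin j hpj.le).lt_of_ne (σ.injective.ne hjq.ne')
  have hqp : σ q < σ p := (hmin p le_rfl).lt_of_ne (σ.injective.ne (hpj.trans hjq).ne')
  rcases lt_or_gt_of_ne (σ.injective.ne hpj.ne) with hpj' | hjp
  · obtain ⟨l, hpl, -, hlq⟩ := hmesh p j q hpj hjq hqp hpj'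
    exact (hmin l hpl.le).not_gt hlq
  · exact h321 ⟨p, j, q, hpj, hjq, hjp, hqj⟩

lemma apply_eq_or_isLeast_isDescTop (h321 : avoids321 σ) (hmesh : avoidsMesh231 σ)
    (hm : IsLeast (σ '' Set.Ici p) m) :
    σ p = m ∨ (IsDescBot σ m ∧ IsLeast (σ '' Set.Ici p ∩ {t | IsDescTop σ t}) (σ p)) := by
  have hsucc := symm_le_succ_of_isLeast_image_Ici h321 hmesh hm
  obtain ⟨q, hpq, rfl⟩ := hm.1
  rw [Equiv.symm_apply_apply] at hsucc
  rw [Set.mem_Ici] at hpq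
  rcases eq_or_ne q p with rfl | hqp
  · exact Or.inl rfl
  have hq : (q : ℕ) = p + 1 := by have := Fin.val_ne_of_ne hqp; omega
  have hdesc : σ q < σ p := (hm.2 ⟨p, Set.self_mem_Ici, rfl⟩).lt_of_ne (σ.injective.ne hqp)
  refine Or.inr ⟨isDescBot_apply_iff.2 ⟨p, hq, hdesc⟩,
    ⟨⟨p, Set.self_mem_Ici, rfl⟩, isDescTop_apply_iff.2 ⟨q, hq, hdesc⟩⟩, ?_⟩
  rintro _ ⟨⟨r, hpr, rfl⟩, hr⟩
  rcases (Set.mem_Ici.1 hpr).eq_or_lt with rfl | hpr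
  · exact le_rfl
  · exact (apply_lt_of_isDescTop h321 hpr hr).le

lemma apply_eq_iff_of_isLeast_image_Ici (h321 : avoids321 σ) (hmesh : avoidsMesh231 σ)
    (hm : IsLeast (σ '' Set.Ici p) m) : σ p = m ↔ (IsDescBot σ m → IsDescBot σ (σ p)) := by
  refine ⟨fun h => h ▸ id, fun h => by_contra fun hne => ?_⟩
  obtain ⟨hbot, hleast⟩ := (apply_eq_or_isLeast_isDescTop h321 hmesh hm).resolve_left hne
  exact not_isDescTop_and_isDescBot h321 _ ⟨hleast.1.2, h hbot⟩

lemma isDescBot_apply_iff_of_eqOn_Iio (htop : ∀ v, IsDescTop σ v ↔ IsDescTop τ v)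
    (h : ∀ q < p, σ q = τ q) : IsDescBot σ (σ p) ↔ IsDescBot τ (τ p) := by
  simp only [isDescBot_apply_iff_isDescTop_apply]
  refine exists_congr fun i => and_congr_right fun hi => ?_
  rw [h i (by omega), htop]

lemma apply_eq_of_eqOn_Iio (hσ321 : avoids321 σ) (hσmesh : avoidsMesh231 σ)
    (hτ321 : avoids321 τ) (hτmesh : avoidsMesh231 τ)
    (htop : ∀ v, IsDescTop σ v ↔ IsDescTop τ v) (hbot : ∀ v, IsDescBot σ v ↔ IsDescBot τ v)
    (h : ∀ q < p, σ q = τ q) : σ p = τ p := by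
  obtain ⟨m, hm⟩ := exists_isLeast_image_Ici σ p
  have hsuffix := Equiv.image_Ici_eq_of_eqOn_Iio h
  have hmτ : IsLeast (τ '' Set.Ici p) m := hsuffix ▸ hm
  have hiff : σ p = m ↔ τ p = m := by
    rw [apply_eq_iff_of_isLeast_image_Ici hσ321 hσmesh hm,
      apply_eq_iff_of_isLeast_image_Ici hτ321 hτmesh hmτ, hbot m,
      isDescBot_apply_iff_of_eqOn_Iio htop h]
  by_cases hσm : σ p = m
  · rw [hσm, hiff.1 hσm]
  obtain ⟨-, hσleast⟩ := (apply_eq_or_isLeast_isDescTop hσ321 hσmesh hm).resolve_left hσm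
  obtain ⟨-, hτleast⟩ :=
    (apply_eq_or_isLeast_isDescTop hτ321 hτmesh hmτ).resolve_left (mt hiff.2 hσm)
  have htops : {t | IsDescTop σ t} = {t | IsDescTop τ t} := Set.ext htop
  rw [hsuffix, htops] at hσleast
  exact hσleast.unique hτleast

/-- The map `σ ↦ pathOf σ` is injective on permutations avoiding `321` and the mesh
pattern `(231,{(1,0)})`. -/
theorem pathOf_injOn (n : ℕ) :
    Set.InjOn (pathOf (n := n))
      {σ : Equiv.Perm (Fin n) | avoids321 σ ∧ avoidsMesh231 σ} := by
  rintro σ ⟨hσ321, hσmesh⟩ τ ⟨hτ321, hτmesh⟩ h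
  have htop (v : Fin n) : IsDescTop σ v ↔ IsDescTop τ v := by
    rw [← pathOf_eq_one_iff, h, pathOf_eq_one_iff]
  have hbot (v : Fin n) : IsDescBot σ v ↔ IsDescBot τ v := by
    rw [← pathOf_eq_neg_one_iff hσ321, h, pathOf_eq_neg_one_iff hτ321]
  exact Equiv.ext fun p => WellFoundedLT.induction p fun p ih =>
    apply_eq_of_eqOn_Iio hσ321 hσmesh hτ321 hτmesh htop hbot ih
end
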